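/- arXiv:2305.16255 — 3 statements merged into one kernel-verified Lean document; each statement's English description precedes it below -/
import Mathlib

section
/- There exists a (2n-1)×(2n-1) real matrix B with the following properties: (i) B is a signed permutation matrix, i.e. every entry of B lies in {-1, 0, 1} and every row and every column of B contains exactly one nonzero entry; (ii) B is orthogonal, i.e. BᵀB = I; and (iii) for every a ∈ ℝ^n, y(a) = B y_k(a), where y(a) ∈ ℝ^{2n-1} is the canonical stacked vector with y(a)_i = a_{n-i+1} for 1 ≤ i ≤ n-1 and last n entries D a, and y_k(a) ∈ ℝ^{2n-1} is the stacked vector whose first n-1 entries are (a_n, ..., a_{k+1}, a_{k-1}, ..., a_1) and whose last n entries are A_k a. -/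
open Matrix

/-- The `n × n` differencing matrix `D`: ones on the diagonal, `-1` on the first
subdiagonal (1-based: `D_{i,i} = 1`, `D_{i,i-1} = -1`), zeros elsewhere. -/
def diffMatrix (n : ℕ) : Matrix (Fin n) (Fin n) ℝ :=
  fun i j => if i = j then 1 else if i.val = j.val + 1 then -1 else 0

/-- The `n × n` disaggregation matrix `A_k` (with `k : Fin n` the 0-based index of
the 1-based anchor `k+1`): `(A_k)_{k,k} = 1`; for rows `i > k`, `(A_k)_{i,i} = 1`
and `(A_k)_{i,i-1} = -1`; for rows `i < k`, `(A_k)_{i,i} = 1` and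
`(A_k)_{i,i+1} = -1`; all other entries `0`. -/
def aggMatrix (n : ℕ) (k : Fin n) : Matrix (Fin n) (Fin n) ℝ :=
  fun i j =>
    if i = j then 1
    else if k < i ∧ i.val = j.val + 1 then -1
    else if i < k ∧ j.val = i.val + 1 then -1
    else 0

/-- The canonical stacked vector `y(a) ∈ ℝ^{2n-1}`: `y(a)_i = a_{n-i+1}` for
`1 ≤ i ≤ n-1` (1-based) and the last `n` entries are `D a`. -/
def canonStacked (n : ℕ) (a : Fin n → ℝ) : Fin (2*n-1) → ℝ :=
  fun i =>
    if h : i.val < n - 1 then a ⟨n - 1 - i.val, by omega⟩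
    else (diffMatrix n).mulVec a ⟨i.val - (n - 1), by omega⟩

/-- The `k`-representation stacked vector `y_k(a) ∈ ℝ^{2n-1}`: its first `n-1`
entries are `(a_n, …, a_{k+1}, a_{k-1}, …, a_1)` and its last `n` entries
are `A_k a`. -/
def reprStacked (n : ℕ) (k : Fin n) (a : Fin n → ℝ) : Fin (2*n-1) → ℝ :=
  fun i =>
    if h1 : i.val + k.val + 1 < n then a ⟨n - 1 - i.val, by omega⟩
    else if h2 : i.val < n - 1 then a ⟨n - 2 - i.val, by omega⟩
    else (aggMatrix n k).mulVec a ⟨i.val - (n - 1), by omega⟩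

lemma sum_back {n : ℕ} (f : Fin n → ℝ) (r : Fin n) :
    ∑ j : Fin n, (if r.val = j.val + 1 then f j else 0) =
    if h : 0 < r.val then f ⟨r.val - 1, by omega⟩ else 0 := by
  split_ifs with h
  · rw [Finset.sum_eq_single (⟨r.val - 1, by omega⟩ : Fin n)]
    · rw [if_pos (by simp only [Fin.val_mk]; omega)]
    · intro j _ hj
      rw [if_neg]
      intro hc
      apply hj
      apply Fin.ext
      simp only [Fin.val_mk]
      omega
    · simp
  · apply Finset.sum_eq_zero
    intro j _
    rw [if_neg (by omega)]

lemma sum_fwd {n : ℕ} (f : Fin n → ℝ) (r : Fin n) :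
    ∑ j : Fin n, (if j.val = r.val + 1 then f j else 0) =
    if h : r.val + 1 < n then f ⟨r.val + 1, h⟩ else 0 := by
  split_ifs with h
  · rw [Finset.sum_eq_single (⟨r.val + 1, h⟩ : Fin n)]
    · rw [if_pos (by simp only [Fin.val_mk])]
    · intro j _ hj
      rw [if_neg]
      intro hc
      apply hj
      apply Fin.ext
      simp only [Fin.val_mk]
      omega
    · simp
  · apply Finset.sum_eq_zero
    intro j _
    rw [if_neg (by omega)]

lemma diff_mulVec {n : ℕ} (a : Fin n → ℝ) (r : Fin n) :
    (diffMatrix n).mulVec a r =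
      a r - (if h : 0 < r.val then a ⟨r.val - 1, by omega⟩ else 0) := by
  simp only [Matrix.mulVec, dotProduct, diffMatrix]
  have key : ∀ j : Fin n,
      (if r = j then (1:ℝ) else if r.val = j.val + 1 then -1 else 0) * a j
      = (if j = r then a j else 0) + (if r.val = j.val + 1 then -(a j) else 0) := by
    intro j
    simp only [Fin.ext_iff]
    split_ifs <;> first | (exfalso; omega) | ring1
  rw [Finset.sum_congr rfl (fun j _ => key j), Finset.sum_add_distrib]
  rw [Finset.sum_ite_eq' Finset.univ r a, if_pos (Finset.mem_univ r)]
  rw [sum_back (fun j => -(a j)) r]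
  split_ifs with h <;> ring

lemma agg_mulVec {n : ℕ} (k : Fin n) (a : Fin n → ℝ) (r : Fin n) :
    (aggMatrix n k).mulVec a r =
      if h : k.val < r.val then a r - a ⟨r.val - 1, by omega⟩
      else if h2 : r.val < k.val then a r - a ⟨r.val + 1, by have := k.2; omega⟩
      else a r := by
  simp only [Matrix.mulVec, dotProduct, aggMatrix]
  have key : ∀ j : Fin n,
      (if r = j then (1:ℝ)
        else if k < r ∧ r.val = j.val + 1 then -1
        else if r < k ∧ j.val = r.val + 1 then -1 else 0) * a j
      = (if j = r then a j else 0)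
        + (if k.val < r.val then (if r.val = j.val + 1 then -(a j) else 0) else 0)
        + (if r.val < k.val then (if j.val = r.val + 1 then -(a j) else 0) else 0) := by
    intro j
    simp only [Fin.ext_iff, Fin.lt_def]
    split_ifs <;> first | (exfalso; omega) | ring1
  rw [Finset.sum_congr rfl (fun j _ => key j)]
  rw [Finset.sum_add_distrib, Finset.sum_add_distrib]
  rw [Finset.sum_ite_eq' Finset.univ r a, if_pos (Finset.mem_univ r)]
  by_cases h1 : k.val < r.val
  · simp only [if_pos h1, if_neg (by omega : ¬ r.val < k.val), Finset.sum_const_zero]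
    rw [sum_back (fun j => -(a j)) r, dif_pos (by omega : 0 < r.val)]
    rw [dif_pos h1]
    ring
  · by_cases h2 : r.val < k.val
    · simp only [if_neg h1, if_pos h2, Finset.sum_const_zero]
      rw [sum_fwd (fun j => -(a j)) r, dif_pos (by have := k.2; omega : r.val + 1 < n)]
      rw [dif_neg h1, dif_pos h2]
      ring
    · simp only [if_neg h1, if_neg h2, Finset.sum_const_zero]
      rw [dif_neg h1, dif_neg h2]
      ring

/-- The permutation on indices: a cycle on the window `[n-1-k, n-1+k]`. -/
def sigmaFun (N K i : ℕ) : ℕ :=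
  if i = N - 1 - K then N - 1 + K
  else if N - 1 - K < i ∧ i ≤ N - 1 + K then i - 1
  else i

def tauFun (N K j : ℕ) : ℕ :=
  if j = N - 1 + K then N - 1 - K
  else if N - 1 - K ≤ j ∧ j < N - 1 + K then j + 1
  else j

lemma sigma_lt {N K i : ℕ} (hK : K < N) (hi : i < 2 * N - 1) :
    sigmaFun N K i < 2 * N - 1 := by
  unfold sigmaFun; split_ifs <;> omega

lemma tau_lt {N K j : ℕ} (hK : K < N) (hj : j < 2 * N - 1) :
    tauFun N K j < 2 * N - 1 := by
  unfold tauFun; split_ifs <;> omega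

lemma sigma_tau {N K j : ℕ} (hN : 1 ≤ N) (hK : K < N) (hj : j < 2 * N - 1) :
    sigmaFun N K (tauFun N K j) = j := by
  unfold sigmaFun tauFun; split_ifs <;> omega

lemma sigma_inj {N K i₁ i₂ : ℕ} (hK : K < N) (h₁ : i₁ < 2 * N - 1) (h₂ : i₂ < 2 * N - 1)
    (h : sigmaFun N K i₁ = sigmaFun N K i₂) : i₁ = i₂ := by
  unfold sigmaFun at h; split_ifs at h <;> omega

lemma fin_mk_eq {n x y : ℕ} {p : x < n} {q : y < n} (h : x = y) :
    (⟨x, p⟩ : Fin n) = ⟨y, q⟩ := by subst h; rfl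

lemma key_eq (n : ℕ) (hn : 1 < n) (k : Fin n) (a : Fin n → ℝ) (i : Fin (2*n-1)) :
    canonStacked n a i
      = (if n - 1 < i.val ∧ i.val ≤ n - 1 + k.val then (-1:ℝ) else 1)
        * reprStacked n k a ⟨sigmaFun n k.val i.val, sigma_lt k.2 i.2⟩ := by
  obtain ⟨I, hi⟩ := i
  have hK := k.2
  simp only [Fin.val_mk]
  by_cases hc1 : I + k.val + 1 < n
  · -- Case 1 : I < n - 1 - k
    have hS : sigmaFun n k.val I = I := by unfold sigmaFun; split_ifs <;> omega
    have hL : canonStacked n a ⟨I, hi⟩ = a ⟨n - 1 - I, by omega⟩ := by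
      simp only [canonStacked, Fin.val_mk]
      rw [dif_pos (by omega : I < n - 1)]
    have hR : reprStacked n k a ⟨sigmaFun n k.val I, sigma_lt k.2 hi⟩
        = a ⟨n - 1 - I, by omega⟩ := by
      simp only [reprStacked, Fin.val_mk]
      rw [dif_pos (by omega)]
      exact congrArg a (fin_mk_eq (by omega))
    rw [hL, hR, if_neg (by omega), one_mul]
  · by_cases hc2 : I = n - 1 - k.val
    · -- Case 2 : anchor position, maps to n - 1 + k
      have hS : sigmaFun n k.val I = n - 1 + k.val := by unfold sigmaFun; split_ifs <;> omega
      have hL : canonStacked n a ⟨I, hi⟩ = a ⟨k.val, hK⟩ := by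
        simp only [canonStacked, Fin.val_mk]
        by_cases hK0 : k.val = 0
        · rw [dif_neg (by omega : ¬ I < n - 1), diff_mulVec,
            dif_neg (by (try simp only [Fin.val_mk]); omega), sub_zero]
          exact congrArg a (fin_mk_eq (by (try simp only [Fin.val_mk]); omega))
        · rw [dif_pos (by omega : I < n - 1)]
          exact congrArg a (fin_mk_eq (by omega))
      have hR : reprStacked n k a ⟨sigmaFun n k.val I, sigma_lt k.2 hi⟩
          = a ⟨k.val, hK⟩ := by
        simp only [reprStacked, Fin.val_mk]
        rw [dif_neg (by omega), dif_neg (by omega), agg_mulVec,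
          dif_neg (by (try simp only [Fin.val_mk]); omega),
          dif_neg (by (try simp only [Fin.val_mk]); omega)]
        exact congrArg a (fin_mk_eq (by (try simp only [Fin.val_mk]); omega))
      rw [hL, hR, if_neg (by omega), one_mul]
    · by_cases hc3 : I < n - 1
      · -- Case 3 : n - 1 - k < I < n - 1, maps to I - 1, second block
        have hS : sigmaFun n k.val I = I - 1 := by unfold sigmaFun; split_ifs <;> omega
        have hL : canonStacked n a ⟨I, hi⟩ = a ⟨n - 1 - I, by omega⟩ := by
          simp only [canonStacked, Fin.val_mk]
          rw [dif_pos hc3]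
        have hR : reprStacked n k a ⟨sigmaFun n k.val I, sigma_lt k.2 hi⟩
            = a ⟨n - 1 - I, by omega⟩ := by
          simp only [reprStacked, Fin.val_mk]
          rw [dif_neg (by omega), dif_pos (by omega)]
          exact congrArg a (fin_mk_eq (by omega))
        rw [hL, hR, if_neg (by omega), one_mul]
      · by_cases hc4 : I = n - 1
        · -- Case 4 : I = n - 1, k ≥ 1, maps to n - 2
          have hK1 : 1 ≤ k.val := by omega
          have hS : sigmaFun n k.val I = I - 1 := by unfold sigmaFun; split_ifs <;> omega
          have hL : canonStacked n a ⟨I, hi⟩ = a ⟨0, by omega⟩ := by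
            simp only [canonStacked, Fin.val_mk]
            rw [dif_neg (by omega), diff_mulVec,
              dif_neg (by (try simp only [Fin.val_mk]); omega), sub_zero]
            exact congrArg a (fin_mk_eq (by (try simp only [Fin.val_mk]); omega))
          have hR : reprStacked n k a ⟨sigmaFun n k.val I, sigma_lt k.2 hi⟩
              = a ⟨0, by omega⟩ := by
            simp only [reprStacked, Fin.val_mk]
            rw [dif_neg (by omega), dif_pos (by omega)]
            exact congrArg a (fin_mk_eq (by omega))
          rw [hL, hR, if_neg (by omega), one_mul]
        · by_cases hc5 : I ≤ n - 1 + k.val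
          · -- Case 5 : n - 1 < I ≤ n - 1 + k : sign -1, maps to I - 1
            have hS : sigmaFun n k.val I = I - 1 := by unfold sigmaFun; split_ifs <;> omega
            have hL : canonStacked n a ⟨I, hi⟩
                = a ⟨I - (n-1), by omega⟩ - a ⟨I - n, by omega⟩ := by
              simp only [canonStacked, Fin.val_mk]
              rw [dif_neg (by omega), diff_mulVec,
                dif_pos (by (try simp only [Fin.val_mk]); omega)]
              congr 1 <;> exact congrArg a (fin_mk_eq (by (try simp only [Fin.val_mk]); omega))
            have hR : reprStacked n k a ⟨sigmaFun n k.val I, sigma_lt k.2 hi⟩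
                = a ⟨I - n, by omega⟩ - a ⟨I - (n-1), by omega⟩ := by
              simp only [reprStacked, Fin.val_mk]
              rw [dif_neg (by omega), dif_neg (by omega), agg_mulVec,
                dif_neg (by (try simp only [Fin.val_mk]); omega),
                dif_pos (by (try simp only [Fin.val_mk]); omega)]
              congr 1 <;> exact congrArg a (fin_mk_eq (by (try simp only [Fin.val_mk]); omega))
            rw [hL, hR, if_pos (by omega), neg_one_mul, neg_sub]
          · -- Case 6 : I > n - 1 + k : identity, sign 1
            have hS : sigmaFun n k.val I = I := by unfold sigmaFun; split_ifs <;> omega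
            have hL : canonStacked n a ⟨I, hi⟩
                = a ⟨I - (n-1), by omega⟩ - a ⟨I - n, by omega⟩ := by
              simp only [canonStacked, Fin.val_mk]
              rw [dif_neg (by omega), diff_mulVec,
                dif_pos (by (try simp only [Fin.val_mk]); omega)]
              congr 1 <;> exact congrArg a (fin_mk_eq (by (try simp only [Fin.val_mk]); omega))
            have hR : reprStacked n k a ⟨sigmaFun n k.val I, sigma_lt k.2 hi⟩
                = a ⟨I - (n-1), by omega⟩ - a ⟨I - n, by omega⟩ := by
              simp only [reprStacked, Fin.val_mk]
              rw [dif_neg (by omega), dif_neg (by omega), agg_mulVec,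
                dif_pos (by (try simp only [Fin.val_mk]); omega)]
              congr 1 <;> exact congrArg a (fin_mk_eq (by (try simp only [Fin.val_mk]); omega))
            rw [hL, hR, if_neg (by omega), one_mul]

/-- There exists a signed permutation matrix `B` (entries in `{-1,0,1}`, exactly
one nonzero entry in each row and column), orthogonal (`BᵀB = I`), with
`y(a) = B y_k(a)` for all `a ∈ ℝⁿ`. -/
theorem exists_signed_perm_between_representations (n : ℕ) (hn : 1 < n) (k : Fin n) :
    ∃ B : Matrix (Fin (2*n-1)) (Fin (2*n-1)) ℝ,
      (∀ i j, B i j = -1 ∨ B i j = 0 ∨ B i j = 1) ∧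
      (∀ i, ∃! j, B i j ≠ 0) ∧
      (∀ j, ∃! i, B i j ≠ 0) ∧
      Bᵀ * B = 1 ∧
      (∀ a : Fin n → ℝ, canonStacked n a = B.mulVec (reprStacked n k a)) := by
  refine ⟨fun i j => if (j : ℕ) = sigmaFun n k.val i.val
      then (if n - 1 < i.val ∧ i.val ≤ n - 1 + k.val then (-1:ℝ) else 1) else 0, ?_, ?_, ?_, ?_, ?_⟩
  · intro i j
    dsimp only
    split_ifs <;> simp
  · intro i
    refine ⟨⟨sigmaFun n k.val i.val, sigma_lt k.2 i.2⟩, ?_, ?_⟩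
    · dsimp only
      rw [if_pos (by exact rfl)]
      split_ifs <;> norm_num
    · intro j hj
      dsimp only at hj
      by_cases h : (j : ℕ) = sigmaFun n k.val i.val
      · exact Fin.ext (by simpa using h)
      · rw [if_neg h] at hj; exact absurd rfl hj
  · intro j
    have hst : sigmaFun n k.val (tauFun n k.val j.val) = j.val :=
      sigma_tau (by omega) k.2 j.2
    refine ⟨⟨tauFun n k.val j.val, tau_lt k.2 j.2⟩, ?_, ?_⟩
    · dsimp only
      rw [if_pos (by exact hst.symm)]
      split_ifs <;> norm_num
    · intro i hi
      dsimp only at hi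
      by_cases h : (j : ℕ) = sigmaFun n k.val i.val
      · apply Fin.ext
        apply sigma_inj k.2 i.2 (tau_lt k.2 j.2)
        rw [← h]
        exact hst.symm
      · rw [if_neg h] at hi; exact absurd rfl hi
  · ext j j'
    have hst : sigmaFun n k.val (tauFun n k.val j.val) = j.val :=
      sigma_tau (by omega) k.2 j.2
    erw [Matrix.mul_apply, Matrix.one_apply]
    simp only [Matrix.transpose, Matrix.of_apply]
    rw [Finset.sum_eq_single (⟨tauFun n k.val j.val, tau_lt k.2 j.2⟩ : Fin (2*n-1))]
    · by_cases hjj : j = j'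
      · subst hjj
        rw [if_pos rfl]
        dsimp only
        rw [if_pos (by exact hst.symm)]
        split_ifs <;> norm_num
      · rw [if_neg hjj]
        dsimp only
        rw [if_neg (show ¬ (j' : ℕ) = sigmaFun n k.val
            ((⟨tauFun n k.val j.val, tau_lt k.2 j.2⟩ : Fin (2*n-1)) : ℕ) from by
          intro hc
          rw [(by exact hst : sigmaFun n k.val
            ((⟨tauFun n k.val j.val, tau_lt k.2 j.2⟩ : Fin (2*n-1)) : ℕ) = j.val)] at hc
          exact hjj (Fin.ext hc.symm)), mul_zero]
    · intro i _ hine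
      by_cases h : (j : ℕ) = sigmaFun n k.val i.val
      · exfalso
        apply hine
        apply Fin.ext
        apply sigma_inj k.2 i.2 (tau_lt k.2 j.2)
        rw [← h]
        exact hst.symm
      · rw [if_neg h, zero_mul]
    · intro hmem
      exact absurd (Finset.mem_univ _) hmem
  · intro a
    funext i
    simp only [Matrix.mulVec, dotProduct]
    rw [Finset.sum_eq_single (⟨sigmaFun n k.val i.val, sigma_lt k.2 i.2⟩ : Fin (2*n-1))]
    · rw [if_pos (by exact rfl)]
      exact key_eq n hn k a i
    · intro j _ hjne
      rw [if_neg (fun hc => hjne (Fin.ext (by simpa using hc))), zero_mul]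
    · intro hmem
      exact absurd (Finset.mem_univ _) hmem
end

section
/- (Theorem 1, invariance of optimal reconciliation under orthogonal change of representation.) Suppose S = B S_k C, and define W_k := Bᵀ W B (so W_k is symmetric positive definite and W_k⁻¹ = Bᵀ W⁻¹ B). Assume that SᵀW⁻¹S is invertible. Then S_kᵀ W_k⁻¹ S_k is invertible, and for every ŷ_k ∈ ℝ^m, setting ŷ := B ŷ_k, the reconciled vectors agree: S (SᵀW⁻¹S)⁻¹ SᵀW⁻¹ ŷ = B · S_k (S_kᵀ W_k⁻¹ S_k)⁻¹ S_kᵀ W_k⁻¹ ŷ_k. -/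
open Matrix

/-- Theorem 1 (invariance of optimal reconciliation under an orthogonal change of
representation): if `S = B S_k C` with `B` orthogonal, `C` invertible and `W`
symmetric positive definite, then with `W_k := Bᵀ W B` (which is symmetric
positive definite with `W_k⁻¹ = Bᵀ W⁻¹ B`), invertibility of `SᵀW⁻¹S` gives
invertibility of `S_kᵀ W_k⁻¹ S_k`, and for every `ŷ_k` with `ŷ := B ŷ_k` the
reconciled vectors agree:
`S (SᵀW⁻¹S)⁻¹ SᵀW⁻¹ ŷ = B (S_k (S_kᵀW_k⁻¹S_k)⁻¹ S_kᵀW_k⁻¹ ŷ_k)`. -/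
theorem reconciliation_invariant_of_orthogonal_repr
    (m n : ℕ) (hm : 0 < m) (hn : 0 < n)
    (S Sk : Matrix (Fin m) (Fin n) ℝ)
    (B : Matrix (Fin m) (Fin m) ℝ) (hB : Bᵀ * B = 1)
    (C : Matrix (Fin n) (Fin n) ℝ) (hC : IsUnit C)
    (W : Matrix (Fin m) (Fin m) ℝ) (hW : W.PosDef)
    (hS : S = B * Sk * C)
    (hSW : IsUnit (Sᵀ * W⁻¹ * S)) :
    (Bᵀ * W * B).PosDef ∧
    (Bᵀ * W * B)⁻¹ = Bᵀ * W⁻¹ * B ∧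
    IsUnit (Skᵀ * (Bᵀ * W * B)⁻¹ * Sk) ∧
    ∀ yk : Fin m → ℝ,
      (S * (Sᵀ * W⁻¹ * S)⁻¹ * Sᵀ * W⁻¹).mulVec (B.mulVec yk) =
        B.mulVec ((Sk * (Skᵀ * (Bᵀ * W * B)⁻¹ * Sk)⁻¹ * Skᵀ *
          (Bᵀ * W * B)⁻¹).mulVec yk) := by
  have hBu : IsUnit B := by
    have : IsUnit (B.det) := by
      have := congrArg Matrix.det hB
      simp [Matrix.det_mul] at this
      exact IsUnit.of_mul_eq_one _ this
    exact (Matrix.isUnit_iff_isUnit_det B).2 this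
  have hBBt : B * Bᵀ = 1 := mul_eq_one_comm.mp hB
  have hWW : W * W⁻¹ = 1 := Matrix.mul_nonsing_inv W ((Matrix.isUnit_iff_isUnit_det W).mp hW.isUnit)
  -- Part 1: PosDef
  have hPD : (Bᵀ * W * B).PosDef := by
    refine Matrix.posDef_iff_dotProduct_mulVec.mpr ⟨?_, fun x hx => ?_⟩
    · have h := Matrix.isHermitian_conjTranspose_mul_mul B hW.isHermitian
      simpa [Matrix.conjTranspose_eq_transpose_of_trivial] using h
    · have hBx : B.mulVec x ≠ 0 := by
        intro h
        exact hx ((Matrix.mulVec_injective_iff_isUnit.mpr hBu).eq_iff.mp (by simp [h]))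
      have := hW.dotProduct_mulVec_pos hBx
      simpa [Matrix.mul_assoc, ← Matrix.mulVec_mulVec, Matrix.dotProduct_mulVec,
        Matrix.vecMul_transpose, star_trivial] using this
  -- Part 2: inverse formula
  have hinv : (Bᵀ * W * B)⁻¹ = Bᵀ * W⁻¹ * B := by
    apply Matrix.inv_eq_right_inv
    calc Bᵀ * W * B * (Bᵀ * W⁻¹ * B)
        = Bᵀ * (W * ((B * Bᵀ) * (W⁻¹ * B))) := by
          simp only [Matrix.mul_assoc]
      _ = 1 := by rw [hBBt, one_mul, ← Matrix.mul_assoc W, hWW, one_mul, hB]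
  -- key algebraic identity
  have hkey : Sᵀ * W⁻¹ * S = Cᵀ * (Skᵀ * (Bᵀ * W⁻¹ * B) * Sk) * C := by
    subst hS
    simp [Matrix.transpose_mul, Matrix.mul_assoc]
  have hCt : IsUnit Cᵀ := by
    rw [Matrix.isUnit_iff_isUnit_det] at hC ⊢
    simpa using hC
  -- Part 3: IsUnit
  have hNu : IsUnit (Skᵀ * (Bᵀ * W * B)⁻¹ * Sk) := by
    rw [hinv]
    rw [Matrix.isUnit_iff_isUnit_det] at hSW hC hCt ⊢
    rw [hkey, Matrix.det_mul, Matrix.det_mul] at hSW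
    exact isUnit_of_mul_isUnit_right (isUnit_of_mul_isUnit_left hSW)
  refine ⟨hPD, hinv, hNu, ?_⟩
  -- matrix identity for part 4
  have hCC : C * C⁻¹ = 1 := Matrix.mul_nonsing_inv C ((Matrix.isUnit_iff_isUnit_det C).mp hC)
  have hCtC : Cᵀ⁻¹ * Cᵀ = 1 :=
    Matrix.nonsing_inv_mul Cᵀ ((Matrix.isUnit_iff_isUnit_det Cᵀ).mp hCt)
  have hMinv : (Sᵀ * W⁻¹ * S)⁻¹ = C⁻¹ * (Skᵀ * (Bᵀ * W⁻¹ * B) * Sk)⁻¹ * Cᵀ⁻¹ := by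
    rw [hkey, Matrix.mul_inv_rev, Matrix.mul_inv_rev, ← Matrix.mul_assoc]
  have E : S * (Sᵀ * W⁻¹ * S)⁻¹ * Sᵀ * W⁻¹ * B =
      B * (Sk * (Skᵀ * (Bᵀ * W * B)⁻¹ * Sk)⁻¹ * Skᵀ * (Bᵀ * W * B)⁻¹) := by
    rw [hinv, hMinv, hS]
    calc B * Sk * C * (C⁻¹ * (Skᵀ * (Bᵀ * W⁻¹ * B) * Sk)⁻¹ * Cᵀ⁻¹) * (B * Sk * C)ᵀ * W⁻¹ * B
        = B * (Sk * ((C * C⁻¹) * ((Skᵀ * (Bᵀ * W⁻¹ * B) * Sk)⁻¹ *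
            ((Cᵀ⁻¹ * Cᵀ) * (Skᵀ * (Bᵀ * (W⁻¹ * B))))))) := by
          simp only [Matrix.transpose_mul, Matrix.mul_assoc]
      _ = B * (Sk * (Skᵀ * (Bᵀ * W⁻¹ * B) * Sk)⁻¹ * Skᵀ * (Bᵀ * W⁻¹ * B)) := by
          rw [hCC, hCtC]
          simp only [Matrix.one_mul, Matrix.mul_assoc]
  intro yk
  rw [Matrix.mulVec_mulVec, Matrix.mulVec_mulVec, E]
end

section
/- (Minimum-trace optimality of the reconciliation matrix.) Suppose S has full column rank (rank S = n) and let P* := (SᵀW⁻¹S)⁻¹SᵀW⁻¹. Then for every n×m real matrix P satisfying P S = I_n, one has trace(S P* W (P*)ᵀ Sᵀ) ≤ trace(S P W Pᵀ Sᵀ). -/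
open Matrix

lemma psd_trace_nonneg {k : ℕ} {M : Matrix (Fin k) (Fin k) ℝ}
    (hM : M.PosSemidef) : 0 ≤ M.trace := by
  rw [Matrix.trace]
  apply Finset.sum_nonneg
  intro i _
  exact hM.diag_nonneg

lemma trace_decomp {n m : ℕ} (S : Matrix (Fin m) (Fin n) ℝ)
    (W : Matrix (Fin m) (Fin m) ℝ) (Q D : Matrix (Fin n) (Fin m) ℝ)
    (h1 : D * W * Qᵀ = 0) (h2 : Q * W * Dᵀ = 0) :
    S * (Q + D) * W * (Q + D)ᵀ * Sᵀ = S * Q * W * Qᵀ * Sᵀ + (S * D) * W * (S * D)ᵀ := by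
  have h1' : D * (W * (Qᵀ * Sᵀ)) = 0 := by
    rw [← Matrix.mul_assoc, ← Matrix.mul_assoc, h1, Matrix.zero_mul]
  have h2' : Q * (W * (Dᵀ * Sᵀ)) = 0 := by
    rw [← Matrix.mul_assoc, ← Matrix.mul_assoc, h2, Matrix.zero_mul]
  simp only [Matrix.transpose_add, Matrix.transpose_mul, Matrix.mul_add, Matrix.add_mul,
    Matrix.mul_assoc, h1', h2', Matrix.mul_zero, add_zero, zero_add]

/-- Minimum-trace optimality of the reconciliation matrix: if `S` has full
column rank and `P* := (SᵀW⁻¹S)⁻¹SᵀW⁻¹`, then for every `P` with `P S = I`,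
`trace(S P* W (P*)ᵀ Sᵀ) ≤ trace(S P W Pᵀ Sᵀ)`. -/
theorem minimum_trace_optimality
    (m n : ℕ) (hm : 0 < m) (hn : 0 < n) (hmn : n ≤ m)
    (S : Matrix (Fin m) (Fin n) ℝ)
    (W : Matrix (Fin m) (Fin m) ℝ) (hW : W.PosDef)
    (hrank : S.rank = n)
    (P : Matrix (Fin n) (Fin m) ℝ) (hP : P * S = 1) :
    (S * ((Sᵀ * W⁻¹ * S)⁻¹ * Sᵀ * W⁻¹) * W * ((Sᵀ * W⁻¹ * S)⁻¹ * Sᵀ * W⁻¹)ᵀ * Sᵀ).trace ≤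
      (S * P * W * Pᵀ * Sᵀ).trace := by
  -- basic facts about W
  have hWsymm : Wᵀ = W := by
    have := hW.isHermitian
    rwa [Matrix.IsHermitian, Matrix.conjTranspose_eq_transpose_of_trivial] at this
  have hWinv : W⁻¹.PosDef := hW.inv
  have hWinvsymm : (W⁻¹)ᵀ = W⁻¹ := by
    have := hWinv.isHermitian
    rwa [Matrix.IsHermitian, Matrix.conjTranspose_eq_transpose_of_trivial] at this
  have hWunit : IsUnit W.det := isUnit_iff_ne_zero.mpr hW.det_pos.ne'
  -- injectivity of mulVec S
  have hSinj : Function.Injective S.mulVecLin := by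
    rw [← LinearMap.ker_eq_bot]
    rw [← Submodule.finrank_eq_zero (R := ℝ)]
    have h1 := LinearMap.finrank_range_add_finrank_ker S.mulVecLin
    have h2 : Module.finrank ℝ (LinearMap.range S.mulVecLin) = n := by
      have : S.rank = Module.finrank ℝ (LinearMap.range S.mulVecLin) := rfl
      omega
    have h3 : Module.finrank ℝ (Fin n → ℝ) = n := by simp
    omega
  -- A := Sᵀ W⁻¹ S is positive definite
  have hApd : (Sᵀ * W⁻¹ * S).PosDef := by
    rw [Matrix.posDef_iff_dotProduct_mulVec]
    constructor
    · show (Sᵀ * W⁻¹ * S)ᴴ = Sᵀ * W⁻¹ * S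
      rw [Matrix.conjTranspose_eq_transpose_of_trivial]
      rw [Matrix.transpose_mul, Matrix.transpose_mul, Matrix.transpose_transpose,
        hWinvsymm, Matrix.mul_assoc]
    · intro x hx
      have hSx : S *ᵥ x ≠ 0 := by
        intro h
        apply hx
        apply hSinj
        simpa [Matrix.mulVecLin_apply] using h
      have hpos := hWinv.dotProduct_mulVec_pos hSx
      have key : dotProduct (star x) ((Sᵀ * W⁻¹ * S) *ᵥ x)
          = dotProduct (star (S *ᵥ x)) (W⁻¹ *ᵥ (S *ᵥ x)) := by
        simp only [star_trivial]
        rw [Matrix.mul_assoc, ← Matrix.mulVec_mulVec, ← Matrix.mulVec_mulVec]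
        rw [Matrix.dotProduct_mulVec x Sᵀ, Matrix.vecMul_transpose]
      rw [key]
      exact hpos
  have hAunit : IsUnit (Sᵀ * W⁻¹ * S).det := isUnit_iff_ne_zero.mpr hApd.det_pos.ne'
  -- the optimal matrix Q
  have hQS : ((Sᵀ * W⁻¹ * S)⁻¹ * Sᵀ * W⁻¹) * S = 1 := by
    rw [Matrix.mul_assoc, Matrix.mul_assoc, ← Matrix.mul_assoc Sᵀ,
      Matrix.nonsing_inv_mul _ hAunit]
  have hQW : ((Sᵀ * W⁻¹ * S)⁻¹ * Sᵀ * W⁻¹) * W = (Sᵀ * W⁻¹ * S)⁻¹ * Sᵀ := by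
    rw [Matrix.mul_assoc, Matrix.nonsing_inv_mul W hWunit, Matrix.mul_one]
  have hWQt : W * ((Sᵀ * W⁻¹ * S)⁻¹ * Sᵀ * W⁻¹)ᵀ = S * ((Sᵀ * W⁻¹ * S)⁻¹)ᵀ := by
    have h1 : (((Sᵀ * W⁻¹ * S)⁻¹ * Sᵀ * W⁻¹) * W)ᵀ = ((Sᵀ * W⁻¹ * S)⁻¹ * Sᵀ)ᵀ := by
      rw [hQW]
    rw [Matrix.transpose_mul, hWsymm] at h1
    rw [h1, Matrix.transpose_mul, Matrix.transpose_transpose]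
  have hDWQ : (P - ((Sᵀ * W⁻¹ * S)⁻¹ * Sᵀ * W⁻¹)) * W * ((Sᵀ * W⁻¹ * S)⁻¹ * Sᵀ * W⁻¹)ᵀ
      = 0 := by
    rw [Matrix.mul_assoc, hWQt, ← Matrix.mul_assoc, Matrix.sub_mul, hP, hQS,
      sub_self, Matrix.zero_mul]
  have hDS : (P - ((Sᵀ * W⁻¹ * S)⁻¹ * Sᵀ * W⁻¹)) * S = 0 := by
    rw [Matrix.sub_mul, hP, hQS, sub_self]
  have hQWD : ((Sᵀ * W⁻¹ * S)⁻¹ * Sᵀ * W⁻¹) * W * (P - ((Sᵀ * W⁻¹ * S)⁻¹ * Sᵀ * W⁻¹))ᵀ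
      = 0 := by
    rw [hQW, Matrix.mul_assoc, ← Matrix.transpose_mul, hDS, Matrix.transpose_zero,
      Matrix.mul_zero]
  have hPe : ((Sᵀ * W⁻¹ * S)⁻¹ * Sᵀ * W⁻¹) + (P - ((Sᵀ * W⁻¹ * S)⁻¹ * Sᵀ * W⁻¹)) = P := by
    abel
  have hdecomp := trace_decomp S W ((Sᵀ * W⁻¹ * S)⁻¹ * Sᵀ * W⁻¹)
    (P - ((Sᵀ * W⁻¹ * S)⁻¹ * Sᵀ * W⁻¹)) hDWQ hQWD
  rw [hPe] at hdecomp
  -- nonnegativity of the extra term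
  have hpsd : ((S * (P - ((Sᵀ * W⁻¹ * S)⁻¹ * Sᵀ * W⁻¹))) * W
      * (S * (P - ((Sᵀ * W⁻¹ * S)⁻¹ * Sᵀ * W⁻¹)))ᵀ).PosSemidef := by
    have := hW.posSemidef.mul_mul_conjTranspose_same (S * (P - ((Sᵀ * W⁻¹ * S)⁻¹ * Sᵀ * W⁻¹)))
    rwa [Matrix.conjTranspose_eq_transpose_of_trivial] at this
  have htr := psd_trace_nonneg hpsd
  rw [hdecomp, Matrix.trace_add]
  exact le_add_of_nonneg_right htr
end
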